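/- arXiv:0809.3925 — 2 statements merged into one kernel-verified Lean document; each statement's English description precedes it below -/
import Mathlib

section
/- Suppose g ∈ W^{1,2}(S¹; ℝ²) is continuous, z := g·g' has an absolutely continuous representative bounded in modulus by C on S¹, and there is a sequence θ_j → θ₀ with |g'(θ_j)| → ∞ and (J g(θ_j))·g'(θ_j) → 0. Then g(θ₀) = 0. -/
/-!
Lagrange's identity `(g·v)² + (Jg·v)² = |g|²|v|²` turns the two hypotheses into
`|g(θ_j)|² |g'(θ_j)|² ≤ C² + o(1)`; since `|g'(θ_j)| → ∞`, `|g(θ_j)| → 0`, and continuity of `g`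
gives `g(θ₀) = 0`.
-/

open Filter

/-- Euclidean dot product on ℝ². -/
def dot (a b : ℝ × ℝ) : ℝ := a.1 * b.1 + a.2 * b.2

/-- Counterclockwise rotation by π/2 in ℝ². -/
def Jv (a : ℝ × ℝ) : ℝ × ℝ := (-a.2, a.1)

open Topology

theorem dot_sq_add_dot_Jv_sq (a b : ℝ × ℝ) :
    dot a b ^ 2 + dot (Jv a) b ^ 2 = dot a a * dot b b := by
  simp only [dot, Jv]
  ring

theorem dot_self_nonneg (a : ℝ × ℝ) : 0 ≤ dot a a :=
  add_nonneg (mul_self_nonneg a.1) (mul_self_nonneg a.2)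

theorem dot_self_eq_zero {a : ℝ × ℝ} : dot a a = 0 ↔ a = 0 := by
  simp only [dot, Prod.ext_iff, Prod.fst_zero, Prod.snd_zero]
  constructor
  · intro h
    constructor <;> nlinarith [mul_self_nonneg a.1, mul_self_nonneg a.2]
  · rintro ⟨h1, h2⟩
    simp [h1, h2]

-- `‖·‖` on `ℝ × ℝ` is the sup norm, which is dominated by the Euclidean one.
theorem sq_norm_le_dot_self (b : ℝ × ℝ) : ‖b‖ ^ 2 ≤ dot b b := by
  rw [Prod.norm_def, Real.norm_eq_abs, Real.norm_eq_abs, dot]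
  rcases max_cases |b.1| |b.2| with ⟨h, _⟩ | ⟨h, _⟩ <;> rw [h, sq_abs] <;>
    nlinarith [mul_self_nonneg b.1, mul_self_nonneg b.2]

theorem dot_self_mul_sq_norm_le (a b : ℝ × ℝ) :
    dot a a * ‖b‖ ^ 2 ≤ dot a b ^ 2 + dot (Jv a) b ^ 2 := by
  rw [dot_sq_add_dot_Jv_sq]
  exact mul_le_mul_of_nonneg_left (sq_norm_le_dot_self b) (dot_self_nonneg a)

theorem tendsto_zero_of_mul_le_add {α : Type*} {l : Filter α} {f N w : α → ℝ} {c : ℝ}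
    (hf : ∀ x, 0 ≤ f x) (hN : Tendsto N l atTop) (hw : Tendsto w l (𝓝 0))
    (hle : ∀ x, f x * N x ≤ c + w x) : Tendsto f l (𝓝 0) := by
  have hbound : Tendsto (fun x => (c + w x) / N x) l (𝓝 0) := by
    simpa using (tendsto_const_nhds.add hw).div_atTop hN
  refine tendsto_of_tendsto_of_tendsto_of_le_of_le' tendsto_const_nhds hbound
    (Eventually.of_forall hf) ?_
  filter_upwards [hN.eventually_gt_atTop 0] with x hx
  exact (le_div_iff₀ hx).2 (hle x)

theorem stmt_6_general (g g' : ℝ → ℝ × ℝ) (hg : Continuous g) (C : ℝ)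
    (hbound : ∀ t : ℝ, |dot (g t) (g' t)| ≤ C)
    (θ : ℕ → ℝ) (θ₀ : ℝ)
    (h1 : Tendsto θ atTop (nhds θ₀))
    (h2 : Tendsto (fun j => ‖g' (θ j)‖) atTop atTop)
    (h3 : Tendsto (fun j => dot (Jv (g (θ j))) (g' (θ j))) atTop (nhds 0)) :
    g θ₀ = 0 := by
  have hsq_bound (t : ℝ) : dot (g t) (g' t) ^ 2 ≤ C ^ 2 :=
    sq_le_sq.2 ((hbound t).trans (le_abs_self C))
  have hto_zero : Tendsto (fun j => dot (g (θ j)) (g (θ j))) atTop (𝓝 0) :=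
    tendsto_zero_of_mul_le_add (fun j => dot_self_nonneg _)
      ((tendsto_pow_atTop two_ne_zero).comp h2) (by simpa using h3.pow 2)
      (fun j => (dot_self_mul_sq_norm_le _ _).trans (by gcongr; exact hsq_bound _))
  have hto_limit : Tendsto (fun j => dot (g (θ j)) (g (θ j))) atTop (𝓝 (dot (g θ₀) (g θ₀))) :=
    ((by unfold dot; fun_prop : Continuous fun t => dot (g t) (g t)).tendsto θ₀).comp h1
  exact dot_self_eq_zero.1 (tendsto_nhds_unique hto_limit hto_zero)

/-- If `g` is continuous, `g·g'` is bounded by `C`, and along a sequence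
`θ_j → θ₀` one has `|g'(θ_j)| → ∞` and `(J g(θ_j))·g'(θ_j) → 0`, then `g(θ₀) = 0`. -/
theorem stmt_6 (g g' : ℝ → ℝ × ℝ) (hg : Continuous g) (C : ℝ) (hC : 0 < C)
    (hbound : ∀ t : ℝ, |dot (g t) (g' t)| ≤ C)
    (θ : ℕ → ℝ) (θ₀ : ℝ)
    (h1 : Tendsto θ atTop (nhds θ₀))
    (h2 : Tendsto (fun j => ‖g' (θ j)‖) atTop atTop)
    (h3 : Tendsto (fun j => dot (Jv (g (θ j))) (g' (θ j))) atTop (nhds 0)) :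
    g θ₀ = 0 :=
  stmt_6_general g g' hg C hbound θ θ₀ h1 h2 h3
end

section
/- Let r, γ be C² on (0,ε₀) with r > 0, j := γ' > 0, d := r² j, and suppose g = r e_R(γ) satisfies the Euler–Lagrange equation g − h'(d) J g' − (g' + h'(d) J g)' = 0 with h(t) = t^{−s}, s > 0. Then the quantity d + r² h'(d) = d − s r² d^{−(s+1)} is constant on (0,ε₀); equivalently there exists τ ∈ ℝ with s r² = τ d^{s+1} + d^{s+2} on (0,ε₀). -/
def jDot (a b : ℝ × ℝ) : ℝ := (Jv a).1 * b.1 + (Jv a).2 * b.2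

lemma jDot_add_smul_Jv (u v : ℝ × ℝ) (a : ℝ) :
    jDot u (v + a • Jv u) = jDot u v + a * (u.1 ^ 2 + u.2 ^ 2) := by
  simp only [jDot, Jv, Prod.fst_add, Prod.snd_add, Prod.smul_fst, Prod.smul_snd, smul_eq_mul]
  ring

section Derivatives

variable {f g : ℝ → ℝ × ℝ} {f' g' : ℝ × ℝ} {x : ℝ}

lemma HasDerivAt.prod_fst (hf : HasDerivAt f f' x) : HasDerivAt (fun t => (f t).1) f'.1 x :=
  (hasFDerivAt_fst (p := f x)).comp_hasDerivAt x hf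

lemma HasDerivAt.prod_snd (hf : HasDerivAt f f' x) : HasDerivAt (fun t => (f t).2) f'.2 x :=
  (hasFDerivAt_snd (p := f x)).comp_hasDerivAt x hf

lemma HasDerivAt.jDot (hf : HasDerivAt f f' x) (hg : HasDerivAt g g' x) :
    HasDerivAt (fun t => jDot (f t) (g t)) (jDot f' (g x) + jDot (f x) g') x := by
  have hfun : (fun t => _root_.jDot (f t) (g t)) =
      fun t => (f t).1 * (g t).2 - (f t).2 * (g t).1 := by
    funext t
    simp only [_root_.jDot, Jv]
    ring
  rw [hfun]
  exact ((hf.prod_fst.mul hg.prod_snd).sub (hf.prod_snd.mul hg.prod_fst)).congr_deriv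
    (by simp only [_root_.jDot, Jv]; ring)

end Derivatives

theorem hasDerivAt_jDot_eq_zero_of_eulerLagrange {g G : ℝ → ℝ × ℝ} {Dg DG : ℝ × ℝ} {a x : ℝ}
    (hg : HasDerivAt g Dg x) (hG : HasDerivAt G DG x) (hGx : G x = Dg + a • Jv (g x))
    (hEL : g x - a • Jv Dg - DG = 0) :
    HasDerivAt (fun t => jDot (g t) (G t)) 0 x := by
  convert hg.jDot hG using 1
  have hEL₁ := congrArg Prod.fst hEL
  have hEL₂ := congrArg Prod.snd hEL
  simp only [Jv, Prod.fst_sub, Prod.snd_sub, Prod.smul_fst, Prod.smul_snd, smul_eq_mul,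
    Prod.fst_zero, Prod.snd_zero] at hEL₁ hEL₂
  simp only [jDot, Jv, hGx, Prod.fst_add, Prod.snd_add, Prod.smul_fst, Prod.smul_snd, smul_eq_mul]
  linear_combination -(g x).2 * hEL₁ + (g x).1 * hEL₂

theorem jDot_polar_eq_of_hasDerivAt {r γ : ℝ → ℝ} {j x : ℝ} {Dg : ℝ × ℝ}
    (hγ : HasDerivAt γ j x)
    (hg : HasDerivAt (fun t => (r t * Real.cos (γ t), r t * Real.sin (γ t))) Dg x) :
    jDot (r x * Real.cos (γ x), r x * Real.sin (γ x)) Dg = r x ^ 2 * j := by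
  -- `g₂ cos γ − g₁ sin γ ≡ 0` needs no differentiability of `r`; differentiating it gives the claim.
  have hvanish : HasDerivAt (fun t => r t * Real.sin (γ t) * Real.cos (γ t)
      - r t * Real.cos (γ t) * Real.sin (γ t))
      ((Dg.2 * Real.cos (γ x) + r x * Real.sin (γ x) * (-Real.sin (γ x) * j))
        - (Dg.1 * Real.sin (γ x) + r x * Real.cos (γ x) * (Real.cos (γ x) * j))) x :=
    (hg.prod_snd.mul hγ.cos).sub (hg.prod_fst.mul hγ.sin)
  have hzero : (fun t => r t * Real.sin (γ t) * Real.cos (γ t)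
      - r t * Real.cos (γ t) * Real.sin (γ t)) = fun _ => 0 := by
    funext t; ring
  rw [hzero] at hvanish
  have h := hvanish.unique (hasDerivAt_const x 0)
  simp only [jDot, Jv]
  linear_combination r x * h + r x ^ 2 * j * Real.sin_sq_add_cos_sq (γ x)

theorem exists_eq_const_of_hasDerivAt_zero {s : Set ℝ} {f : ℝ → ℝ} (hs : IsOpen s)
    (hs' : IsPreconnected s) (hf : ∀ x ∈ s, HasDerivAt f 0 x) : ∃ c, ∀ x ∈ s, f x = c :=
  hs.exists_is_const_of_deriv_eq_zero hs'
    (fun x hx => (hf x hx).differentiableAt.differentiableWithinAt) (fun x hx => (hf x hx).deriv)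

theorem mul_eq_of_add_neg_mul_rpow_eq {s d x c : ℝ} (hd : 0 < d)
    (h : d + -s * d ^ (-(s + 1)) * x = c) :
    s * x = -c * d ^ (s + 1) + d ^ (s + 2) := by
  have hinv : d ^ (-(s + 1)) * d ^ (s + 1) = 1 := by
    rw [← Real.rpow_add hd, neg_add_cancel, Real.rpow_zero]
  have hsucc : d ^ (s + 2) = d * d ^ (s + 1) := by
    rw [show s + 2 = 1 + (s + 1) by ring, Real.rpow_add hd, Real.rpow_one]
  linear_combination -(d ^ (s + 1)) * h - s * x * hinv - hsucc

theorem stmt_11_general (s ε₀ : ℝ)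
    (r γ j : ℝ → ℝ) (Dg DG : ℝ → ℝ × ℝ)
    (hr : ∀ θ ∈ Set.Ioo (0:ℝ) ε₀, 0 < r θ)
    (hj : ∀ θ ∈ Set.Ioo (0:ℝ) ε₀, 0 < j θ)
    (hγ : ∀ θ ∈ Set.Ioo (0:ℝ) ε₀, HasDerivAt γ (j θ) θ)
    (hDg : ∀ θ ∈ Set.Ioo (0:ℝ) ε₀,
      HasDerivAt (fun t => (r t * Real.cos (γ t), r t * Real.sin (γ t))) (Dg θ) θ)
    (hDG : ∀ θ ∈ Set.Ioo (0:ℝ) ε₀,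
      HasDerivAt (fun t => Dg t +
          (-s * ((r t) ^ 2 * j t) ^ (-(s + 1))) •
            Jv (r t * Real.cos (γ t), r t * Real.sin (γ t)))
        (DG θ) θ)
    (hEL : ∀ θ ∈ Set.Ioo (0:ℝ) ε₀,
      (r θ * Real.cos (γ θ), r θ * Real.sin (γ θ)) -
          (-s * ((r θ) ^ 2 * j θ) ^ (-(s + 1))) • Jv (Dg θ) - DG θ = 0) :
    ∃ τ : ℝ, ∀ θ ∈ Set.Ioo (0:ℝ) ε₀,
      s * (r θ) ^ 2 = τ * ((r θ) ^ 2 * j θ) ^ (s + 1) + ((r θ) ^ 2 * j θ) ^ (s + 2) := by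
  obtain ⟨c, hc⟩ := exists_eq_const_of_hasDerivAt_zero isOpen_Ioo isPreconnected_Ioo
    fun θ hθ => hasDerivAt_jDot_eq_zero_of_eulerLagrange (hDg θ hθ) (hDG θ hθ) rfl (hEL θ hθ)
  refine ⟨-c, fun θ hθ => mul_eq_of_add_neg_mul_rpow_eq ?_ ?_⟩
  · have := hr θ hθ
    have := hj θ hθ
    positivity
  · rw [← hc θ hθ, jDot_add_smul_Jv, jDot_polar_eq_of_hasDerivAt (hγ θ hθ) (hDg θ hθ)]
    linear_combination s * (r θ ^ 2 * j θ) ^ (-(s + 1)) * r θ ^ 2 * Real.sin_sq_add_cos_sq (γ θ)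

/-- If `g = r e_R(γ)` solves the Euler–Lagrange equation
`g − h'(d) J g' − (g' + h'(d) J g)' = 0` with `h(t) = t^{−s}`, `d = r² j`,
then `d + r² h'(d)` is constant; equivalently there is `τ ∈ ℝ` with
`s r² = τ d^{s+1} + d^{s+2}`. -/
theorem stmt_11 (s ε₀ : ℝ) (hs : 0 < s) (hε : 0 < ε₀)
    (r γ j : ℝ → ℝ) (Dg DG : ℝ → ℝ × ℝ)
    (hr : ∀ θ ∈ Set.Ioo (0:ℝ) ε₀, 0 < r θ)
    (hj : ∀ θ ∈ Set.Ioo (0:ℝ) ε₀, 0 < j θ)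
    (hγ : ∀ θ ∈ Set.Ioo (0:ℝ) ε₀, HasDerivAt γ (j θ) θ)
    (hDg : ∀ θ ∈ Set.Ioo (0:ℝ) ε₀,
      HasDerivAt (fun t => (r t * Real.cos (γ t), r t * Real.sin (γ t))) (Dg θ) θ)
    (hDG : ∀ θ ∈ Set.Ioo (0:ℝ) ε₀,
      HasDerivAt (fun t => Dg t +
          (-s * ((r t) ^ 2 * j t) ^ (-(s + 1))) •
            Jv (r t * Real.cos (γ t), r t * Real.sin (γ t)))
        (DG θ) θ)
    (hEL : ∀ θ ∈ Set.Ioo (0:ℝ) ε₀,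
      (r θ * Real.cos (γ θ), r θ * Real.sin (γ θ)) -
          (-s * ((r θ) ^ 2 * j θ) ^ (-(s + 1))) • Jv (Dg θ) - DG θ = 0) :
    ∃ τ : ℝ, ∀ θ ∈ Set.Ioo (0:ℝ) ε₀,
      s * (r θ) ^ 2 = τ * ((r θ) ^ 2 * j θ) ^ (s + 1) + ((r θ) ^ 2 * j θ) ^ (s + 2) :=
  stmt_11_general s ε₀ r γ j Dg DG hr hj hγ hDg hDG hEL
end
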